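/- Let Q_{2,γ} be the relaxed quadratic form defined for γ ∈ (0,∞) by Q_{2,γ}(A) = inf_{B,φ} ∬_{I×Y} Q(y, Λ(x₃,A,B) + (∇_yφ, (1/γ)∂₃φ)) dy dx₃, with Q satisfying c₁|sym G|² ≤ Q(y,G) = Q(y,sym G) ≤ c₂|sym G|². Then Q_{2,γ} is a quadratic form on ℝ^{2×2}_sym, it vanishes at A = 0, and it is positive definite on symmetric matrices: there exists c > 0 (depending on c₁, c₂, γ) with Q_{2,γ}(A) ≥ c|A|² for all A ∈ ℝ^{2×2}_sym. -/

import Mathlib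

open MeasureTheory Matrix

noncomputable section

def cellD : Set (Fin 3 → ℝ) :=
  {x | x 0 ∈ Set.Ico (0:ℝ) 1 ∧ x 1 ∈ Set.Ico (0:ℝ) 1 ∧ x 2 ∈ Set.Ioo (-(1/2):ℝ) (1/2)}

def frob3 (M : Matrix (Fin 3) (Fin 3) ℝ) : ℝ := Real.sqrt (∑ i, ∑ j, (M i j) ^ 2)

def frob2 (M : Matrix (Fin 2) (Fin 2) ℝ) : ℝ := Real.sqrt (∑ i, ∑ j, (M i j) ^ 2)

def sym3 (G : Matrix (Fin 3) (Fin 3) ℝ) : Matrix (Fin 3) (Fin 3) ℝ := (1 / 2 : ℝ) • (G + Gᵀ)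

def iota (A : Matrix (Fin 2) (Fin 2) ℝ) : Matrix (Fin 3) (Fin 3) ℝ :=
  Matrix.of ![![A 0 0, A 0 1, 0], ![A 1 0, A 1 1, 0], ![0, 0, 0]]

def Lam (x3 : ℝ) (A B : Matrix (Fin 2) (Fin 2) ℝ) : Matrix (Fin 3) (Fin 3) ℝ :=
  iota (B + x3 • A)

/-- The matrix (∇_y φ, (1/γ)∂₃φ) built from the gradient of φ, with third column scaled
by 1/γ. -/
def scaledGrad (γ : ℝ) (φ : (Fin 3 → ℝ) → (Fin 3 → ℝ)) (x : Fin 3 → ℝ) :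
    Matrix (Fin 3) (Fin 3) ℝ :=
  Matrix.of fun i j => (if j = 2 then 1 / γ else 1) * fderiv ℝ φ x (Pi.single j 1) i

/-- The relaxed quadratic form Q_{2,γ}(A): the infimum of the cell energy over symmetric
B and (by density, smooth) Y-periodic corrector fields φ. -/
def Q2γ (Q : (Fin 2 → ℝ) → Matrix (Fin 3) (Fin 3) ℝ → ℝ) (γ : ℝ)
    (A : Matrix (Fin 2) (Fin 2) ℝ) : ℝ :=
  sInf {r : ℝ | ∃ B : Matrix (Fin 2) (Fin 2) ℝ, Bᵀ = B ∧
    ∃ φ : (Fin 3 → ℝ) → (Fin 3 → ℝ), ContDiff ℝ (⊤ : ℕ∞) φ ∧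
      (∀ x : Fin 3 → ℝ, φ (x + Pi.single 0 1) = φ x ∧ φ (x + Pi.single 1 1) = φ x) ∧
      r = ∫ x in cellD,
        Q (fun i : Fin 2 => x i.castSucc) (Lam (x 2) A B + scaledGrad γ φ x)}


/-- Cauchy functional equation: an additive function bounded on [0,1] is linear. -/
theorem additive_bounded_linear (f : ℝ → ℝ) (hadd : ∀ s t, f (s + t) = f s + f t)
    (C : ℝ) (hbd : ∀ t ∈ Set.Icc (0:ℝ) 1, |f t| ≤ C) : ∀ t, f t = t * f 1 := by
  set F : ℝ →+ ℝ := AddMonoidHom.mk' f hadd with hF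
  have hq : ∀ q : ℚ, f (q : ℝ) = (q : ℝ) * f 1 := by
    intro q
    have : f ((q : ℝ) * 1) = (q : ℝ) * f 1 := by
      have := map_rat_smul F q (1 : ℝ)
      simpa [Rat.smul_def, hF] using this
    simpa using this
  set g : ℝ → ℝ := fun t => f t - t * f 1 with hg
  have gadd : ∀ s t, g (s + t) = g s + g t := by
    intro s t; simp only [hg, hadd]; ring
  have gq : ∀ q : ℚ, g (q : ℝ) = 0 := by intro q; simp [hg, hq]
  have gbd : ∀ t ∈ Set.Icc (0:ℝ) 1, |g t| ≤ C + |f 1| := by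
    intro t ht
    have h1 : |g t| ≤ |f t| + |t| * |f 1| := by
      rw [hg]; simpa [abs_mul] using abs_sub (f t) (t * f 1)
    have h2 : |t| ≤ 1 := by rw [abs_le]; exact ⟨by linarith [ht.1], ht.2⟩
    have h3 : |t| * |f 1| ≤ 1 * |f 1| := by
      apply mul_le_mul_of_nonneg_right h2 (abs_nonneg _)
    have := hbd t ht
    nlinarith [abs_nonneg (f 1)]
  have gz : ∀ t, g t = 0 := by
    intro t
    by_contra h
    have hpos : 0 < |g t| := abs_pos.mpr h
    -- g (n • t) = n * g t
    have hgnat : ∀ n : ℕ, g (n * t) = n * g t := by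
      intro n
      induction n with
      | zero => simpa using gq 0
      | succ k ih => push_cast; rw [add_mul, one_mul, gadd, ih]; ring
    obtain ⟨n, hn⟩ := exists_nat_gt ((C + |f 1|) / |g t|)
    have hgn : g (n * t) = n * g t := hgnat n
    have hfrac : g ((n : ℝ) * t) = g ((n : ℝ) * t - ⌊(n : ℝ) * t⌋) := by
      have : ((n:ℝ) * t) = ((n:ℝ)*t - ⌊(n:ℝ)*t⌋) + (⌊(n:ℝ)*t⌋ : ℝ) := by ring
      rw [this, gadd]
      have : g ((⌊(n:ℝ)*t⌋ : ℤ) : ℝ) = 0 := by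
        have := gq ((⌊(n:ℝ)*t⌋ : ℤ) : ℚ); push_cast at this ⊢; simpa using this
      simp [this]
    have hmem : ((n:ℝ)*t - ⌊(n:ℝ)*t⌋) ∈ Set.Icc (0:ℝ) 1 :=
      ⟨by linarith [Int.floor_le ((n:ℝ)*t)], by linarith [Int.lt_floor_add_one ((n:ℝ)*t)]⟩
    have : (n : ℝ) * |g t| ≤ C + |f 1| := by
      have h1 := gbd _ hmem
      rw [← hfrac, hgn, abs_mul, abs_of_nonneg (by positivity : (0:ℝ) ≤ (n:ℝ))] at h1
      exact h1
    have : (n : ℝ) ≤ (C + |f 1|) / |g t| := (le_div_iff₀ hpos).mpr this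
    linarith
  intro t
  have := gz t
  simp only [hg] at this
  linarith


namespace Stmt12Aux


abbrev M2 := Matrix (Fin 2) (Fin 2) ℝ

section JvN

variable (P : M2 → ℝ)
  (hpar : ∀ X Y : M2, Xᵀ = X → Yᵀ = Y → P (X + Y) + P (X - Y) = 2 * P X + 2 * P Y)
  (h0 : P 0 = 0)
  (K : ℝ) (hK : 0 ≤ K)
  (hnn : ∀ X : M2, Xᵀ = X → 0 ≤ P X)
  (hbd : ∀ X : M2, Xᵀ = X → P X ≤ K * ∑ i, ∑ j, (X i j) ^ 2)

/-- the polarization form -/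
def Bp (X Y : M2) : ℝ := (P (X + Y) - P (X - Y)) / 4

lemma symT {X Y : M2} (hX : Xᵀ = X) (hY : Yᵀ = Y) : (X + Y)ᵀ = X + Y := by
  rw [Matrix.transpose_add, hX, hY]

lemma symTsub {X Y : M2} (hX : Xᵀ = X) (hY : Yᵀ = Y) : (X - Y)ᵀ = X - Y := by
  rw [Matrix.transpose_sub, hX, hY]

lemma symTsmul {X : M2} (t : ℝ) (hX : Xᵀ = X) : (t • X)ᵀ = t • X := by
  rw [Matrix.transpose_smul, hX]

include hpar h0 in
lemma Peven {X : M2} (hX : Xᵀ = X) : P (-X) = P X := by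
  have := hpar 0 X (by simp) hX
  simp only [zero_add, zero_sub, h0] at this
  linarith

include hpar h0 in
lemma Bp_zero_left {Z : M2} (hZ : Zᵀ = Z) : Bp P 0 Z = 0 := by
  simp only [Bp, zero_add, zero_sub, Peven P hpar h0 hZ]
  ring

include hpar in
lemma Bp_midpoint {X Y Z : M2} (hX : Xᵀ = X) (hY : Yᵀ = Y) (hZ : Zᵀ = Z) :
    Bp P X Z + Bp P Y Z = 2 * Bp P ((1/2 : ℝ) • (X + Y)) Z := by
  have h1 : P (X + Z) + P (Y + Z)
      = 2 * P ((1/2 : ℝ) • (X + Y) + Z) + 2 * P ((1/2 : ℝ) • (X - Y)) := by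
    have := hpar ((1/2 : ℝ) • (X + Y) + Z) ((1/2 : ℝ) • (X - Y))
      (symT (symTsmul _ (symT hX hY)) hZ) (symTsmul _ (symTsub hX hY))
    have e1 : (1/2 : ℝ) • (X + Y) + Z + (1/2 : ℝ) • (X - Y) = X + Z := by
      match_scalars <;> ring
    have e2 : (1/2 : ℝ) • (X + Y) + Z - (1/2 : ℝ) • (X - Y) = Y + Z := by
      match_scalars <;> ring
    rw [e1, e2] at this
    linarith
  have h2 : P (X - Z) + P (Y - Z)
      = 2 * P ((1/2 : ℝ) • (X + Y) - Z) + 2 * P ((1/2 : ℝ) • (X - Y)) := by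
    have := hpar ((1/2 : ℝ) • (X + Y) - Z) ((1/2 : ℝ) • (X - Y))
      (symTsub (symTsmul _ (symT hX hY)) hZ) (symTsmul _ (symTsub hX hY))
    have e1 : (1/2 : ℝ) • (X + Y) - Z + (1/2 : ℝ) • (X - Y) = X - Z := by
      match_scalars <;> ring
    have e2 : (1/2 : ℝ) • (X + Y) - Z - (1/2 : ℝ) • (X - Y) = Y - Z := by
      match_scalars <;> ring
    rw [e1, e2] at this
    linarith
  simp only [Bp]
  linarith

include hpar h0 in
lemma Bp_half {X Z : M2} (hX : Xᵀ = X) (hZ : Zᵀ = Z) :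
    Bp P X Z = 2 * Bp P ((1/2 : ℝ) • X) Z := by
  have := Bp_midpoint P hpar hX (by simp : (0 : M2)ᵀ = 0) hZ
  rw [Bp_zero_left P hpar h0 hZ] at this
  simpa using this

include hpar h0 in
lemma Bp_add_left {X Y Z : M2} (hX : Xᵀ = X) (hY : Yᵀ = Y) (hZ : Zᵀ = Z) :
    Bp P (X + Y) Z = Bp P X Z + Bp P Y Z := by
  rw [Bp_midpoint P hpar hX hY hZ, Bp_half P hpar h0 (symT hX hY) hZ]

lemma Bp_symm {X Y : M2} (hX : Xᵀ = X) (hY : Yᵀ = Y)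
    (hpar' : ∀ X Y : M2, Xᵀ = X → Yᵀ = Y → P (X + Y) + P (X - Y) = 2 * P X + 2 * P Y)
    (h0' : P 0 = 0) : Bp P X Y = Bp P Y X := by
  have : Y - X = -(X - Y) := by abel
  rw [Bp, Bp, add_comm Y X, this, Peven P hpar' h0' (by rw [symTsub hX hY])]

include hpar h0 hK hnn hbd in
lemma Bp_smul_left {X Z : M2} (t : ℝ) (hX : Xᵀ = X) (hZ : Zᵀ = Z) :
    Bp P (t • X) Z = t * Bp P X Z := by
  set f : ℝ → ℝ := fun s => Bp P (s • X) Z with hf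
  have fadd : ∀ s u : ℝ, f (s + u) = f s + f u := by
    intro s u
    have : (s + u) • X = s • X + u • X := add_smul s u X
    rw [hf]; simp only
    rw [this, Bp_add_left P hpar h0 (symTsmul _ hX) (symTsmul _ hX) hZ]
  have fbd : ∀ s ∈ Set.Icc (0:ℝ) 1, |f s| ≤ K / 2 * ((∑ i, ∑ j, (X i j)^2) + ∑ i, ∑ j, (Z i j)^2) := by
    intro s hs
    have key : ∀ W : M2, Wᵀ = W → |Bp P W Z| ≤ K / 2 * ((∑ i, ∑ j, (W i j)^2) + ∑ i, ∑ j, (Z i j)^2) := by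
      intro W hW
      have hsum : (∑ i, ∑ j, ((W + Z) i j)^2) + (∑ i, ∑ j, ((W - Z) i j)^2)
          = 2 * (∑ i, ∑ j, (W i j)^2) + 2 * (∑ i, ∑ j, (Z i j)^2) := by
        simp only [Fin.sum_univ_two, Matrix.add_apply, Matrix.sub_apply]
        ring
      have h1 := hbd (W + Z) (symT hW hZ)
      have h2 := hbd (W - Z) (symTsub hW hZ)
      have h3 := hnn (W + Z) (symT hW hZ)
      have h4 := hnn (W - Z) (symTsub hW hZ)
      rw [Bp, abs_div]
      rw [div_le_iff₀ (by norm_num : (0:ℝ) < |(4:ℝ)|)]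
      have habs : |P (W + Z) - P (W - Z)| ≤ P (W + Z) + P (W - Z) := by
        rw [abs_sub_le_iff]; constructor <;> linarith
      have : P (W + Z) + P (W - Z) ≤ K * (2 * (∑ i, ∑ j, (W i j)^2) + 2 * (∑ i, ∑ j, (Z i j)^2)) := by
        rw [← hsum]; rw [mul_add]; exact add_le_add h1 h2
      rw [abs_of_nonneg (by norm_num : (0:ℝ) ≤ 4)]
      nlinarith
    have h5 := key (s • X) (symTsmul _ hX)
    have h6 : (∑ i, ∑ j, ((s • X) i j)^2) ≤ ∑ i, ∑ j, (X i j)^2 := by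
      apply Finset.sum_le_sum; intro i _; apply Finset.sum_le_sum; intro j _
      simp only [Matrix.smul_apply, smul_eq_mul, mul_pow]
      have hs2 : s ^ 2 ≤ 1 := by nlinarith [hs.1, hs.2]
      nlinarith [sq_nonneg (X i j)]
    calc |f s| = |Bp P (s • X) Z| := rfl
    _ ≤ K / 2 * ((∑ i, ∑ j, ((s • X) i j)^2) + ∑ i, ∑ j, (Z i j)^2) := h5
    _ ≤ K / 2 * ((∑ i, ∑ j, (X i j)^2) + ∑ i, ∑ j, (Z i j)^2) := by
        apply mul_le_mul_of_nonneg_left _ (by linarith)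
        linarith
  have h1 : f 1 = Bp P X Z := by rw [hf]; simp only; rw [one_smul]
  have h2 := additive_bounded_linear f fadd _ fbd t
  rw [h1] at h2
  exact h2

end JvN



def Itv : Fin 3 → Set ℝ := ![Set.Ico (0:ℝ) 1, Set.Ico (0:ℝ) 1, Set.Ioo (-(1/2):ℝ) (1/2)]

lemma mem_cellD_iff {x : Fin 3 → ℝ} : x ∈ cellD ↔ ∀ i, x i ∈ Itv i := by
  constructor
  · rintro ⟨h0, h1, h2⟩ i
    fin_cases i
    · exact h0
    · exact h1
    · exact h2
  · intro h
    exact ⟨h 0, h 1, h 2⟩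

lemma cellD_eq_pi : cellD = Set.univ.pi Itv := by
  ext x; rw [mem_cellD_iff, Set.mem_univ_pi]

lemma measurableSet_Itv (i : Fin 3) : MeasurableSet (Itv i) := by
  fin_cases i <;> simp [Itv, measurableSet_Ico, measurableSet_Ioo]

lemma measurableSet_cellD : MeasurableSet cellD := by
  rw [cellD_eq_pi]
  exact MeasurableSet.univ_pi fun i => measurableSet_Itv i

lemma cellD_subset_Icc : cellD ⊆ Set.Icc (fun _ => (-1:ℝ)) (fun _ => (1:ℝ)) := by
  intro x hx
  rw [mem_cellD_iff] at hx
  constructor <;> intro i <;> have := hx i <;> fin_cases i <;>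
    simp only [Itv] at this <;>
    simp_all [Set.mem_Ico, Set.mem_Ioo] <;> linarith

lemma volume_cellD_lt_top : volume cellD < ⊤ :=
  lt_of_le_of_lt (measure_mono cellD_subset_Icc) (isCompact_Icc.measure_lt_top)

/-- continuous functions are integrable on cellD -/
lemma integrableOn_cellD_of_continuous {f : (Fin 3 → ℝ) → ℝ} (hf : Continuous f) :
    IntegrableOn f cellD := by
  have : IntegrableOn f (Set.Icc (fun _ => (-1:ℝ)) (fun _ => (1:ℝ))) :=
    hf.continuousOn.integrableOn_compact isCompact_Icc
  exact this.mono_set cellD_subset_Icc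

/-- bounded measurable functions are integrable on cellD -/
lemma integrableOn_cellD_of_bdd {f : (Fin 3 → ℝ) → ℝ} (hm : Measurable f) (C : ℝ)
    (hC : ∀ x ∈ cellD, |f x| ≤ C) : IntegrableOn f cellD := by
  have hfin : IsFiniteMeasure (volume.restrict cellD) :=
    ⟨by rw [Measure.restrict_apply_univ]; exact volume_cellD_lt_top⟩
  apply Integrable.mono' (g := fun _ => C) (integrable_const C)
    hm.aestronglyMeasurable
  rw [ae_restrict_iff' measurableSet_cellD]
  filter_upwards with x hx
  simpa using hC x hx

/-- splitting the integral over cellD at coordinate j, inner integral over coordinate j -/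
lemma setIntegral_cellD_split (j : Fin 3) (f : (Fin 3 → ℝ) → ℝ) (hf : IntegrableOn f cellD) :
    ∫ x in cellD, f x
      = ∫ b in Set.univ.pi fun k => Itv (j.succAbove k), ∫ a in Itv j, f (j.insertNth a b) := by
  set e := MeasurableEquiv.piFinSuccAbove (fun _ : Fin 3 => ℝ) j with he
  set S : Set (ℝ × (Fin 2 → ℝ)) := (Itv j) ×ˢ (Set.univ.pi fun k => Itv (j.succAbove k)) with hS
  have hSm : MeasurableSet S :=
    (measurableSet_Itv j).prod (MeasurableSet.univ_pi fun k => measurableSet_Itv _)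
  have hpre : cellD = e ⁻¹' S := by
    ext x
    rw [mem_cellD_iff, Set.mem_preimage]
    have : e x = (x j, fun k => x (j.succAbove k)) := rfl
    rw [this, hS, Set.mem_prod, Set.mem_univ_pi]
    exact Fin.forall_iff_succAbove j
  have hmp : MeasurePreserving e volume volume :=
    volume_preserving_piFinSuccAbove (fun _ : Fin 3 => ℝ) j
  have hemb : MeasurableEmbedding e := e.measurableEmbedding
  have hint : ∫ x in cellD, f x = ∫ p in S, f (e.symm p) := by
    rw [hpre]
    rw [← hmp.setIntegral_preimage_emb hemb (fun p => f (e.symm p)) S]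
    congr 1
    ext x
    congr 1
    exact (e.symm_apply_apply x).symm
  rw [hint]
  have hintg : Integrable (fun p => f (e.symm p)) ((volume.restrict (Itv j)).prod
      (volume.restrict (Set.univ.pi fun k => Itv (j.succAbove k)))) := by
    rw [Measure.prod_restrict, ← hS, ← Measure.volume_eq_prod]
    have h2 : Integrable ((fun p => f (e.symm p)) ∘ e) (volume.restrict (e ⁻¹' S)) ↔
        Integrable (fun p => f (e.symm p)) (volume.restrict S) :=
      (hmp.restrict_preimage hSm).integrable_comp_emb hemb
    rw [← h2]
    have : ((fun p => f (e.symm p)) ∘ e) = f := by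
      ext x; simp [e.symm_apply_apply x]
    rw [this, ← hpre]
    exact hf
  have : ∫ p in S, f (e.symm p)
      = ∫ p, f (e.symm p) ∂((volume.restrict (Itv j)).prod
          (volume.restrict (Set.univ.pi fun k => Itv (j.succAbove k)))) := by
    rw [Measure.prod_restrict, ← hS, Measure.volume_eq_prod]
  rw [this, MeasureTheory.integral_prod_symm _ hintg]
  apply setIntegral_congr_fun (MeasurableSet.univ_pi fun k => measurableSet_Itv _)
  intro b _
  apply setIntegral_congr_fun (measurableSet_Itv j)
  intro a _
  congr 1




lemma volume_pi_twoface : (volume (Set.univ.pi fun k : Fin 2 => Itv ((2:Fin 3).succAbove k))) = 1 := by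
  rw [volume_pi_pi]
  have h0 : (2:Fin 3).succAbove 0 = 0 := by decide
  have h1 : (2:Fin 3).succAbove 1 = 1 := by decide
  rw [Fin.prod_univ_two, h0, h1]
  have : Itv 0 = Set.Ico (0:ℝ) 1 := rfl
  have h2 : Itv 1 = Set.Ico (0:ℝ) 1 := rfl
  rw [this, h2, Real.volume_Ico]
  norm_num

lemma integral_cellD_x2_pow (k : ℕ) :
    ∫ x in cellD, (x 2)^k = ∫ a in Set.Ioo (-(1/2):ℝ) (1/2), a^k := by
  have hcont : Continuous fun x : Fin 3 → ℝ => (x 2)^k := (continuous_apply 2).pow k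
  rw [setIntegral_cellD_split 2 _ (integrableOn_cellD_of_continuous hcont)]
  have hinner : ∀ b : Fin 2 → ℝ, (∫ a in Itv 2, (((2:Fin 3).insertNth a b : Fin 3 → ℝ) 2)^k)
      = ∫ a in Set.Ioo (-(1/2):ℝ) (1/2), a^k := by
    intro b
    have : Itv 2 = Set.Ioo (-(1/2):ℝ) (1/2) := rfl
    rw [this]
    apply setIntegral_congr_fun measurableSet_Ioo
    intro a _
    simp [Fin.insertNth_apply_same]
  calc (∫ b in Set.univ.pi fun k : Fin 2 => Itv ((2:Fin 3).succAbove k),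
        ∫ a in Itv 2, (((2:Fin 3).insertNth a b : Fin 3 → ℝ) 2)^k)
      = ∫ _b in Set.univ.pi fun k : Fin 2 => Itv ((2:Fin 3).succAbove k),
        ∫ a in Set.Ioo (-(1/2):ℝ) (1/2), a^k := by
        apply setIntegral_congr_fun (MeasurableSet.univ_pi fun k => measurableSet_Itv _)
        intro b _
        exact hinner b
    _ = ∫ a in Set.Ioo (-(1/2):ℝ) (1/2), a^k := by
        rw [setIntegral_const]
        simp [Measure.real, volume_pi_twoface]

lemma integral_cellD_x2 : ∫ x in cellD, x 2 = 0 := by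
  have := integral_cellD_x2_pow 1
  simp only [pow_one] at this
  rw [this, ← MeasureTheory.integral_Ioc_eq_integral_Ioo,
    ← intervalIntegral.integral_of_le (by norm_num : (-(1/2):ℝ) ≤ 1/2)]
  simp [integral_id]

lemma integral_cellD_x2_sq : ∫ x in cellD, (x 2)^2 = 1/12 := by
  rw [integral_cellD_x2_pow 2, ← integral_Ioc_eq_integral_Ioo,
    ← intervalIntegral.integral_of_le (by norm_num : (-(1/2):ℝ) ≤ 1/2), integral_pow]
  norm_num




lemma continuous_dirDeriv (φ : (Fin 3 → ℝ) → (Fin 3 → ℝ)) (hφ : ContDiff ℝ (⊤ : ℕ∞) φ)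
    (v : Fin 3 → ℝ) (i : Fin 3) :
    Continuous fun x => fderiv ℝ φ x v i := by
  have h1 : Continuous (fderiv ℝ φ) := hφ.continuous_fderiv (by simp)
  have h2 : Continuous fun x => fderiv ℝ φ x v := h1.clm_apply continuous_const
  exact (continuous_apply i).comp h2

lemma integral_cellD_x2_deriv (φ : (Fin 3 → ℝ) → (Fin 3 → ℝ)) (hφ : ContDiff ℝ (⊤ : ℕ∞) φ)
    (j : Fin 3) (hper : ∀ x, φ (x + Pi.single j 1) = φ x) (hj : j ≠ 2) (i : Fin 3) :
    ∫ x in cellD, (x 2) * fderiv ℝ φ x (Pi.single j 1) i = 0 := by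
  set v : Fin 3 → ℝ := Pi.single j 1 with hv
  have hD : Continuous fun x => fderiv ℝ φ x v i := continuous_dirDeriv φ hφ v i
  have hcont : Continuous fun x : Fin 3 → ℝ => (x 2) * fderiv ℝ φ x v i :=
    (continuous_apply 2).mul hD
  rw [setIntegral_cellD_split j _ (integrableOn_cellD_of_continuous hcont)]
  obtain ⟨kj, hkj⟩ := Fin.exists_succAbove_eq (Ne.symm hj)
  have hItvj : Itv j = Set.Ico (0:ℝ) 1 := by
    fin_cases j
    · rfl
    · rfl
    · exact absurd rfl hj
  have key : ∀ b : Fin 2 → ℝ, (∫ a in Itv j,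
      ((j.insertNth a b : Fin 3 → ℝ) 2) * fderiv ℝ φ (j.insertNth a b) v i) = 0 := by
    intro b
    set c : Fin 3 → ℝ := j.insertNth 0 b with hc
    have hins : ∀ a : ℝ, (j.insertNth a b : Fin 3 → ℝ) = c + a • v := by
      intro a; funext m
      rcases eq_or_ne m j with hm | hm
      · subst hm
        simp only [Fin.insertNth_apply_same, hc, Pi.add_apply, Pi.smul_apply, hv,
          Pi.single_eq_same, smul_eq_mul, mul_one]
        ring
      · obtain ⟨k, hk⟩ := Fin.exists_succAbove_eq hm
        subst hk
        simp only [Fin.insertNth_apply_succAbove, hc, Pi.add_apply, Pi.smul_apply, hv,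
          Pi.single_eq_of_ne (Fin.succAbove_ne j k), smul_eq_mul, mul_zero, add_zero]
    have hx2 : ∀ a : ℝ, (j.insertNth a b : Fin 3 → ℝ) 2 = b kj := by
      intro a; rw [← hkj, Fin.insertNth_apply_succAbove]
    have hderiv : ∀ a : ℝ, HasDerivAt (fun t => φ (c + t • v) i)
        (fderiv ℝ φ (c + a • v) v i) a := by
      intro a
      have hline : HasDerivAt (fun t : ℝ => c + t • v) v a := by
        simpa using ((hasDerivAt_id a).smul_const v).const_add c
      have hphi : HasFDerivAt φ (fderiv ℝ φ (c + a • v)) (c + a • v) :=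
        (hφ.differentiable (by simp) (c + a • v)).hasFDerivAt
      exact hasDerivAt_pi.1 (hphi.comp_hasDerivAt a hline) i
    have hcontline : Continuous fun a : ℝ => fderiv ℝ φ (c + a • v) v i :=
      hD.comp (continuous_const.add (continuous_id.smul continuous_const))
    have hFTC : (∫ a in Set.Ico (0:ℝ) 1, fderiv ℝ φ (c + a • v) v i) = 0 := by
      rw [MeasureTheory.Measure.restrict_congr_set MeasureTheory.Ico_ae_eq_Ioc,
        ← intervalIntegral.integral_of_le (by norm_num : (0:ℝ) ≤ 1),
        intervalIntegral.integral_eq_sub_of_hasDerivAt (fun t _ => hderiv t)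
          (hcontline.intervalIntegrable 0 1)]
      have heq : c + (1:ℝ) • v = (c + (0:ℝ) • v) + Pi.single j 1 := by
        rw [hv]; module
      rw [heq, hper]
      ring
    calc (∫ a in Itv j, ((j.insertNth a b : Fin 3 → ℝ) 2) * fderiv ℝ φ (j.insertNth a b) v i)
        = ∫ a in Set.Ico (0:ℝ) 1, (b kj) * fderiv ℝ φ (c + a • v) v i := by
          rw [hItvj]
          apply setIntegral_congr_fun measurableSet_Ico
          intro a _
          simp only [hx2 a, hins a]
      _ = (b kj) * ∫ a in Set.Ico (0:ℝ) 1, fderiv ℝ φ (c + a • v) v i := by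
          rw [MeasureTheory.integral_const_mul]
      _ = 0 := by rw [hFTC, mul_zero]
  calc (∫ b in Set.univ.pi fun k => Itv (j.succAbove k), ∫ a in Itv j,
        ((j.insertNth a b : Fin 3 → ℝ) 2) * fderiv ℝ φ (j.insertNth a b) v i)
      = ∫ _b in (Set.univ.pi fun k => Itv (j.succAbove k) : Set (Fin 2 → ℝ)), (0:ℝ) := by
        apply setIntegral_congr_fun (MeasurableSet.univ_pi fun k => measurableSet_Itv _)
        intro b _
        exact key b
    _ = 0 := by simp



lemma frob3_sq (M : Matrix (Fin 3) (Fin 3) ℝ) : frob3 M ^ 2 = ∑ i, ∑ j, (M i j) ^ 2 :=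
  Real.sq_sqrt (Finset.sum_nonneg fun i _ => Finset.sum_nonneg fun j _ => sq_nonneg _)

lemma frob2_sq (M : Matrix (Fin 2) (Fin 2) ℝ) : frob2 M ^ 2 = ∑ i, ∑ j, (M i j) ^ 2 :=
  Real.sq_sqrt (Finset.sum_nonneg fun i _ => Finset.sum_nonneg fun j _ => sq_nonneg _)

lemma iota_add (A B : Matrix (Fin 2) (Fin 2) ℝ) : iota (A + B) = iota A + iota B := by
  ext i j
  fin_cases i <;> fin_cases j <;>
    simp [iota, Matrix.add_apply, Matrix.vecHead, Matrix.vecTail, Function.comp]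

lemma iota_smul (t : ℝ) (A : Matrix (Fin 2) (Fin 2) ℝ) : iota (t • A) = t • iota A := by
  ext i j
  fin_cases i <;> fin_cases j <;>
    simp [iota, Matrix.smul_apply, Matrix.vecHead, Matrix.vecTail, Function.comp]

lemma Lam_add (x3 : ℝ) (A B A' B' : Matrix (Fin 2) (Fin 2) ℝ) :
    Lam x3 (A + A') (B + B') = Lam x3 A B + Lam x3 A' B' := by
  rw [Lam, Lam, Lam, ← iota_add]
  have : B + x3 • A + (B' + x3 • A') = B + B' + x3 • (A + A') := by module
  rw [this]

lemma Lam_smul (x3 : ℝ) (t : ℝ) (A B : Matrix (Fin 2) (Fin 2) ℝ) :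
    Lam x3 (t • A) (t • B) = t • Lam x3 A B := by
  rw [Lam, Lam, ← iota_smul]
  have : t • (B + x3 • A) = t • B + x3 • (t • A) := by module
  rw [this]

lemma iota_entry_castSucc (C : Matrix (Fin 2) (Fin 2) ℝ) (α β : Fin 2) :
    iota C α.castSucc β.castSucc = C α β := by
  fin_cases α <;> fin_cases β <;> rfl

lemma castSucc_ne_two (β : Fin 2) : (β.castSucc : Fin 3) ≠ 2 := by
  fin_cases β <;> decide

lemma iota_transpose (C : Matrix (Fin 2) (Fin 2) ℝ) : (iota C)ᵀ = iota Cᵀ := by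
  ext i j
  fin_cases i <;> fin_cases j <;> rfl

lemma sym3_iota_symm {C : Matrix (Fin 2) (Fin 2) ℝ} (hC : Cᵀ = C) :
    sym3 (iota C) = iota C := by
  rw [sym3, iota_transpose, hC]
  module

lemma frob3_iota_sq (C : Matrix (Fin 2) (Fin 2) ℝ) :
    (∑ i, ∑ j, (iota C i j) ^ 2) = ∑ i, ∑ j, (C i j) ^ 2 := by
  rw [Fin.sum_univ_three]
  simp only [Fin.sum_univ_three, Fin.sum_univ_two]
  show (iota C 0 0)^2 + (iota C 0 1)^2 + (iota C 0 2)^2 + ((iota C 1 0)^2 + (iota C 1 1)^2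
    + (iota C 1 2)^2) + ((iota C 2 0)^2 + (iota C 2 1)^2 + (iota C 2 2)^2) = _
  have h00 : iota C 0 0 = C 0 0 := rfl
  have h01 : iota C 0 1 = C 0 1 := rfl
  have h02 : iota C 0 2 = 0 := rfl
  have h10 : iota C 1 0 = C 1 0 := rfl
  have h11 : iota C 1 1 = C 1 1 := rfl
  have h12 : iota C 1 2 = 0 := rfl
  have h20 : iota C 2 0 = 0 := rfl
  have h21 : iota C 2 1 = 0 := rfl
  have h22 : iota C 2 2 = 0 := rfl
  rw [h00, h01, h02, h10, h11, h12, h20, h21, h22]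
  ring

lemma sym3_apply (G : Matrix (Fin 3) (Fin 3) ℝ) (i j : Fin 3) :
    sym3 G i j = (G i j + G j i) / 2 := by
  simp [sym3, Matrix.add_apply, Matrix.transpose_apply]
  ring

/-- sum of squares of the 2x2 in-plane block is at most the full frobenius square -/
lemma sum_inplane_le (G : Matrix (Fin 3) (Fin 3) ℝ) :
    (∑ α : Fin 2, ∑ β : Fin 2, (G α.castSucc β.castSucc) ^ 2) ≤ ∑ i, ∑ j, (G i j) ^ 2 := by
  have h1 : (∑ α : Fin 2, ∑ β : Fin 2, (G α.castSucc β.castSucc) ^ 2)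
      = (G 0 0)^2 + (G 0 1)^2 + (G 1 0)^2 + (G 1 1)^2 := by
    have e0 : (0 : Fin 2).castSucc = (0 : Fin 3) := rfl
    have e1 : (1 : Fin 2).castSucc = (1 : Fin 3) := rfl
    simp only [Fin.sum_univ_two, e0, e1]
    ring
  have h2 : (∑ i, ∑ j, (G i j) ^ 2) = (G 0 0)^2 + (G 0 1)^2 + (G 0 2)^2 + (G 1 0)^2
      + (G 1 1)^2 + (G 1 2)^2 + (G 2 0)^2 + (G 2 1)^2 + (G 2 2)^2 := by
    simp only [Fin.sum_univ_three]
    ring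
  rw [h1, h2]
  nlinarith [sq_nonneg (G 0 2), sq_nonneg (G 1 2), sq_nonneg (G 2 0), sq_nonneg (G 2 1),
    sq_nonneg (G 2 2)]



abbrev M3 := Matrix (Fin 3) (Fin 3) ℝ

/-- expansion of a linear functional on matrices over the standard basis -/
lemma lin_expand (g : M3 →ₗ[ℝ] ℝ) (G : M3) :
    g G = ∑ p, ∑ q, G p q * g (Matrix.single p q 1) := by
  conv_lhs => rw [matrix_eq_sum_single G]
  rw [map_sum]
  apply Finset.sum_congr rfl
  intro p _
  rw [map_sum]
  apply Finset.sum_congr rfl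
  intro q _
  have : Matrix.single p q (G p q) = G p q • Matrix.single p q (1:ℝ) := by
    rw [smul_single, smul_eq_mul, mul_one]
  rw [this, _root_.map_smul, smul_eq_mul]

lemma bilin_expand (f : M3 →ₗ[ℝ] M3 →ₗ[ℝ] ℝ) (G H : M3) :
    f G H = ∑ p, ∑ q, G p q * ∑ r, ∑ s, H r s * f (Matrix.single p q 1) (Matrix.single r s 1) := by
  have h1 : f G H = ∑ p, ∑ q, G p q * f (Matrix.single p q 1) H := by
    have := lin_expand (f.flip H) G
    simpa [LinearMap.flip_apply] using this
  rw [h1]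
  apply Finset.sum_congr rfl
  intro p _
  apply Finset.sum_congr rfl
  intro q _
  rw [lin_expand (f (Matrix.single p q 1)) H]

section Qsec

variable (Q : (Fin 2 → ℝ) → M3 → ℝ)
  (L : (Fin 2 → ℝ) → M3 →ₗ[ℝ] M3 →ₗ[ℝ] ℝ)

lemma Q_nonneg (c₁ : ℝ) (hc₁ : 0 < c₁)
    (hlow : ∀ y G, c₁ * (frob3 (sym3 G)) ^ 2 ≤ Q y G) (y : Fin 2 → ℝ) (G : M3) :
    0 ≤ Q y G :=
  le_trans (by positivity) (hlow y G)

lemma L_eq (hLsymm : ∀ y A B, L y A B = L y B A) (hQL : ∀ y G, Q y G = L y G G)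
    (y : Fin 2 → ℝ) (G H : M3) :
    L y G H = (Q y (G + H) - Q y G - Q y H) / 2 := by
  simp only [hQL, map_add, LinearMap.add_apply]
  rw [hLsymm y H G]
  ring

lemma L_meas (hQmeas : ∀ G, Measurable fun y => Q y G)
    (hLsymm : ∀ y A B, L y A B = L y B A) (hQL : ∀ y G, Q y G = L y G G) (G H : M3) :
    Measurable fun y => L y G H := by
  simp_rw [L_eq Q L hLsymm hQL]
  exact (((hQmeas (G + H)).sub (hQmeas G)).sub (hQmeas H)).div_const 2

lemma Q_par (hQL : ∀ y G, Q y G = L y G G) (y : Fin 2 → ℝ) (G H : M3) :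
    Q y (G + H) + Q y (G - H) = 2 * Q y G + 2 * Q y H := by
  simp only [hQL, map_add, map_sub, LinearMap.add_apply, LinearMap.sub_apply]
  ring

lemma Q_smul (hQL : ∀ y G, Q y G = L y G G) (y : Fin 2 → ℝ) (t : ℝ) (G : M3) :
    Q y (t • G) = t ^ 2 * Q y G := by
  simp only [hQL, _root_.map_smul, LinearMap.smul_apply, smul_eq_mul]
  ring

/-- measurability of x ↦ Q(y(x), M(x)) for entrywise continuous M -/
lemma measurable_Qcomp (hQmeas : ∀ G, Measurable fun y => Q y G)
    (hLsymm : ∀ y A B, L y A B = L y B A) (hQL : ∀ y G, Q y G = L y G G)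
    (M : (Fin 3 → ℝ) → M3) (hM : ∀ i j, Continuous fun x => M x i j) :
    Measurable fun x => Q (fun i : Fin 2 => x i.castSucc) (M x) := by
  have hy : Measurable fun x : Fin 3 → ℝ => (fun i : Fin 2 => x i.castSucc) :=
    measurable_pi_lambda _ fun i => measurable_pi_apply _
  have heq : (fun x => Q (fun i : Fin 2 => x i.castSucc) (M x))
      = fun x => ∑ p, ∑ q, M x p q * ∑ r, ∑ s, M x r s *
          L (fun i : Fin 2 => x i.castSucc) (Matrix.single p q 1) (Matrix.single r s 1) := by
    funext x
    rw [hQL, bilin_expand]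
  rw [heq]
  apply Finset.measurable_sum
  intro p _
  apply Finset.measurable_sum
  intro q _
  apply Measurable.mul (hM p q).measurable
  apply Finset.measurable_sum
  intro r _
  apply Finset.measurable_sum
  intro s _
  exact ((hM r s).measurable).mul ((L_meas Q L hQmeas hLsymm hQL _ _).comp hy)

end Qsec


end Stmt12Aux

namespace Stmt12Aux

lemma iota_sub (A B : Matrix (Fin 2) (Fin 2) ℝ) : iota (A - B) = iota A - iota B := by
  ext i j
  fin_cases i <;> fin_cases j <;>
    simp [iota, Matrix.sub_apply, Matrix.vecHead, Matrix.vecTail, Function.comp]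

lemma Lam_sub (x3 : ℝ) (A B A' B' : Matrix (Fin 2) (Fin 2) ℝ) :
    Lam x3 (A - A') (B - B') = Lam x3 A B - Lam x3 A' B' := by
  rw [Lam, Lam, Lam, ← iota_sub]
  have : B + x3 • A - (B' + x3 • A') = B - B' + x3 • (A - A') := by module
  rw [this]

end Stmt12Aux

namespace Stmt12Aux

section Energy

variable (Q : (Fin 2 → ℝ) → M3 → ℝ)
  (L : (Fin 2 → ℝ) → M3 →ₗ[ℝ] M3 →ₗ[ℝ] ℝ) (γ : ℝ)

/-- the cell energy -/
def En (A B : Matrix (Fin 2) (Fin 2) ℝ) (φ : (Fin 3 → ℝ) → (Fin 3 → ℝ)) : ℝ :=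
  ∫ x in cellD, Q (fun i : Fin 2 => x i.castSucc) (Lam (x 2) A B + scaledGrad γ φ x)

/-- the admissible-value set -/
def Eset (A : Matrix (Fin 2) (Fin 2) ℝ) : Set ℝ :=
  {r : ℝ | ∃ B : Matrix (Fin 2) (Fin 2) ℝ, Bᵀ = B ∧
    ∃ φ : (Fin 3 → ℝ) → (Fin 3 → ℝ), ContDiff ℝ (⊤ : ℕ∞) φ ∧
      (∀ x : Fin 3 → ℝ, φ (x + Pi.single 0 1) = φ x ∧ φ (x + Pi.single 1 1) = φ x) ∧
      r = En Q γ A B φ}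

lemma Q2γ_eq (A : Matrix (Fin 2) (Fin 2) ℝ) : Q2γ Q γ A = sInf (Eset Q γ A) := rfl

lemma sg_add (φ φ' : (Fin 3 → ℝ) → (Fin 3 → ℝ)) (hφ : Differentiable ℝ φ)
    (hφ' : Differentiable ℝ φ') (x : Fin 3 → ℝ) :
    scaledGrad γ (φ + φ') x = scaledGrad γ φ x + scaledGrad γ φ' x := by
  ext i j
  have hd : fderiv ℝ (φ + φ') x = fderiv ℝ φ x + fderiv ℝ φ' x := fderiv_add (hφ x) (hφ' x)
  simp only [scaledGrad, Matrix.of_apply, Matrix.add_apply, hd,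
    ContinuousLinearMap.add_apply, Pi.add_apply]
  ring

lemma sg_sub (φ φ' : (Fin 3 → ℝ) → (Fin 3 → ℝ)) (hφ : Differentiable ℝ φ)
    (hφ' : Differentiable ℝ φ') (x : Fin 3 → ℝ) :
    scaledGrad γ (φ - φ') x = scaledGrad γ φ x - scaledGrad γ φ' x := by
  ext i j
  have hd : fderiv ℝ (φ - φ') x = fderiv ℝ φ x - fderiv ℝ φ' x := fderiv_sub (hφ x) (hφ' x)
  simp only [scaledGrad, Matrix.of_apply, Matrix.sub_apply, hd,
    ContinuousLinearMap.sub_apply, Pi.sub_apply]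
  ring

lemma sg_smul (φ : (Fin 3 → ℝ) → (Fin 3 → ℝ)) (hφ : Differentiable ℝ φ) (t : ℝ)
    (x : Fin 3 → ℝ) :
    scaledGrad γ (t • φ) x = t • scaledGrad γ φ x := by
  ext i j
  have hd : fderiv ℝ (t • φ) x = t • fderiv ℝ φ x := fderiv_const_smul (hφ x) t
  simp only [scaledGrad, Matrix.of_apply, Matrix.smul_apply, hd,
    ContinuousLinearMap.smul_apply, Pi.smul_apply, smul_eq_mul]
  ring

lemma sg_zero (x : Fin 3 → ℝ) :
    scaledGrad γ (fun _ => 0) x = 0 := by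
  ext i j
  have hd : fderiv ℝ (fun _ : Fin 3 → ℝ => (0 : Fin 3 → ℝ)) x = 0 := fderiv_const_apply 0
  simp [scaledGrad, hd]

lemma cont_Lam_entry (A B : Matrix (Fin 2) (Fin 2) ℝ) (i j : Fin 3) :
    Continuous fun x : Fin 3 → ℝ => Lam (x 2) A B i j := by
  fin_cases i <;> fin_cases j <;>
    first
      | exact continuous_const
      | exact continuous_const.add ((continuous_apply 2).mul continuous_const)

lemma cont_sg_entry (φ : (Fin 3 → ℝ) → (Fin 3 → ℝ)) (hφ : ContDiff ℝ (⊤ : ℕ∞) φ) (i j : Fin 3) :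
    Continuous fun x => scaledGrad γ φ x i j :=
  continuous_const.mul (continuous_dirDeriv φ hφ _ i)

lemma cont_M_entry (A B : Matrix (Fin 2) (Fin 2) ℝ) (φ : (Fin 3 → ℝ) → (Fin 3 → ℝ))
    (hφ : ContDiff ℝ (⊤ : ℕ∞) φ) (i j : Fin 3) :
    Continuous fun x => (Lam (x 2) A B + scaledGrad γ φ x) i j := by
  simp only [Matrix.add_apply]
  exact (cont_Lam_entry A B i j).add (cont_sg_entry γ φ hφ i j)

lemma cont_sym3_entry (M : (Fin 3 → ℝ) → M3) (hM : ∀ i j, Continuous fun x => M x i j)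
    (i j : Fin 3) : Continuous fun x => sym3 (M x) i j := by
  simp_rw [sym3_apply]
  exact ((hM i j).add (hM j i)).div_const 2

variable (hQmeas : ∀ G, Measurable fun y => Q y G)
  (hLsymm : ∀ y A B, L y A B = L y B A) (hQL : ∀ y G, Q y G = L y G G)
  (c₁ c₂ : ℝ) (hc₁ : 0 < c₁)
  (hlow : ∀ y G, c₁ * (frob3 (sym3 G)) ^ 2 ≤ Q y G)
  (hup : ∀ y G, Q y G ≤ c₂ * (frob3 (sym3 G)) ^ 2)

include hQmeas hLsymm hQL hc₁ hlow hup in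
lemma integrableOn_Qcomp (M : (Fin 3 → ℝ) → M3) (hM : ∀ i j, Continuous fun x => M x i j) :
    IntegrableOn (fun x => Q (fun i : Fin 2 => x i.castSucc) (M x)) cellD := by
  have hg : Continuous fun x => c₂ * ∑ i, ∑ j, (sym3 (M x) i j)^2 :=
    continuous_const.mul (continuous_finset_sum _ fun i _ =>
      continuous_finset_sum _ fun j _ => (cont_sym3_entry M hM i j).pow 2)
  obtain ⟨C, hC⟩ := (isCompact_Icc (a := fun _ : Fin 3 => (-1:ℝ))
    (b := fun _ => (1:ℝ))).exists_bound_of_continuousOn hg.continuousOn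
  apply integrableOn_cellD_of_bdd (measurable_Qcomp Q L hQmeas hLsymm hQL M hM) C
  intro x hx
  have h0 := Q_nonneg Q c₁ hc₁ hlow (fun i : Fin 2 => x i.castSucc) (M x)
  have h1 : Q (fun i : Fin 2 => x i.castSucc) (M x)
      ≤ c₂ * ∑ i, ∑ j, (sym3 (M x) i j)^2 := by
    have := hup (fun i : Fin 2 => x i.castSucc) (M x)
    rwa [frob3_sq] at this
  have h2 := hC x (cellD_subset_Icc hx)
  rw [Real.norm_eq_abs] at h2
  rw [abs_of_nonneg h0]
  exact h1.trans ((le_abs_self _).trans h2)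

include hQmeas hLsymm hQL hc₁ hlow hup in
lemma integrableOn_En (A B : Matrix (Fin 2) (Fin 2) ℝ) (φ : (Fin 3 → ℝ) → (Fin 3 → ℝ))
    (hφ : ContDiff ℝ (⊤ : ℕ∞) φ) :
    IntegrableOn (fun x => Q (fun i : Fin 2 => x i.castSucc)
      (Lam (x 2) A B + scaledGrad γ φ x)) cellD :=
  integrableOn_Qcomp Q L hQmeas hLsymm hQL c₁ c₂ hc₁ hlow hup _
    (cont_M_entry γ A B φ hφ)

include hQmeas hLsymm hQL hc₁ hlow hup in
lemma En_par (A A' B B' : Matrix (Fin 2) (Fin 2) ℝ)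
    (φ φ' : (Fin 3 → ℝ) → (Fin 3 → ℝ)) (hφ : ContDiff ℝ (⊤ : ℕ∞) φ) (hφ' : ContDiff ℝ (⊤ : ℕ∞) φ') :
    En Q γ (A + A') (B + B') (φ + φ') + En Q γ (A - A') (B - B') (φ - φ')
      = 2 * En Q γ A B φ + 2 * En Q γ A' B' φ' := by
  set M₁ := fun x : Fin 3 → ℝ => Lam (x 2) A B + scaledGrad γ φ x with hM₁
  set M₂ := fun x : Fin 3 → ℝ => Lam (x 2) A' B' + scaledGrad γ φ' x with hM₂
  have hplus : ∀ x : Fin 3 → ℝ,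
      Lam (x 2) (A + A') (B + B') + scaledGrad γ (φ + φ') x = M₁ x + M₂ x := by
    intro x
    rw [Lam_add, sg_add γ φ φ' (hφ.differentiable (by simp)) (hφ'.differentiable (by simp)), hM₁, hM₂]
    ext i j
    simp only [Matrix.add_apply, Matrix.sub_apply]
    ring
  have hminus : ∀ x : Fin 3 → ℝ,
      Lam (x 2) (A - A') (B - B') + scaledGrad γ (φ - φ') x = M₁ x - M₂ x := by
    intro x
    rw [Lam_sub, sg_sub γ φ φ' (hφ.differentiable (by simp)) (hφ'.differentiable (by simp)), hM₁, hM₂]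
    ext i j
    simp only [Matrix.add_apply, Matrix.sub_apply]
    ring
  have hMe₁ : ∀ i j, Continuous fun x => M₁ x i j := cont_M_entry γ A B φ hφ
  have hMe₂ : ∀ i j, Continuous fun x => M₂ x i j := cont_M_entry γ A' B' φ' hφ'
  have hint₁ : IntegrableOn (fun x => Q (fun i : Fin 2 => x i.castSucc) (M₁ x)) cellD :=
    integrableOn_Qcomp Q L hQmeas hLsymm hQL c₁ c₂ hc₁ hlow hup _ hMe₁
  have hint₂ : IntegrableOn (fun x => Q (fun i : Fin 2 => x i.castSucc) (M₂ x)) cellD :=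
    integrableOn_Qcomp Q L hQmeas hLsymm hQL c₁ c₂ hc₁ hlow hup _ hMe₂
  have hintm : IntegrableOn (fun x => Q (fun i : Fin 2 => x i.castSucc) (M₁ x - M₂ x)) cellD := by
    apply integrableOn_Qcomp Q L hQmeas hLsymm hQL c₁ c₂ hc₁ hlow hup
    intro i j
    simp only [Matrix.sub_apply]
    exact (hMe₁ i j).sub (hMe₂ i j)
  have e1 : En Q γ (A + A') (B + B') (φ + φ')
      = ∫ x in cellD, Q (fun i : Fin 2 => x i.castSucc) (M₁ x + M₂ x) := by
    unfold En
    congr 1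
    funext x
    rw [hplus x]
  have e2 : En Q γ (A - A') (B - B') (φ - φ')
      = ∫ x in cellD, Q (fun i : Fin 2 => x i.castSucc) (M₁ x - M₂ x) := by
    unfold En
    congr 1
    funext x
    rw [hminus x]
  have key : (fun x => Q (fun i : Fin 2 => x i.castSucc) (M₁ x + M₂ x))
      = fun x => 2 * Q (fun i : Fin 2 => x i.castSucc) (M₁ x)
        + 2 * Q (fun i : Fin 2 => x i.castSucc) (M₂ x)
        - Q (fun i : Fin 2 => x i.castSucc) (M₁ x - M₂ x) := by
    funext x
    have := Q_par Q L hQL (fun i : Fin 2 => x i.castSucc) (M₁ x) (M₂ x)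
    linarith
  have h2a : IntegrableOn (fun x => 2 * Q (fun i : Fin 2 => x i.castSucc) (M₁ x)) cellD :=
    hint₁.const_mul 2
  have h2b : IntegrableOn (fun x => 2 * Q (fun i : Fin 2 => x i.castSucc) (M₂ x)) cellD :=
    hint₂.const_mul 2
  have h2ab : IntegrableOn (fun x => 2 * Q (fun i : Fin 2 => x i.castSucc) (M₁ x)
      + 2 * Q (fun i : Fin 2 => x i.castSucc) (M₂ x)) cellD := h2a.add h2b
  rw [e1, e2, key, integral_sub h2ab hintm, integral_add h2a h2b,
    MeasureTheory.integral_const_mul, MeasureTheory.integral_const_mul]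
  unfold En
  ring

include hQL in
lemma En_smul (t : ℝ) (A B : Matrix (Fin 2) (Fin 2) ℝ) (φ : (Fin 3 → ℝ) → (Fin 3 → ℝ))
    (hφ : ContDiff ℝ (⊤ : ℕ∞) φ) :
    En Q γ (t • A) (t • B) (t • φ) = t ^ 2 * En Q γ A B φ := by
  unfold En
  rw [← MeasureTheory.integral_const_mul]
  congr 1
  funext x
  rw [Lam_smul, sg_smul γ φ (hφ.differentiable (by simp)) t x, ← smul_add,
    Q_smul Q L hQL]

/-- Cauchy–Schwarz against the weight x₃, by completing the square -/
lemma CS_moment (F : (Fin 3 → ℝ) → ℝ) (hF : Continuous F) :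
    12 * (∫ x in cellD, (x 2) * F x) ^ 2 ≤ ∫ x in cellD, (F x) ^ 2 := by
  set S := ∫ x in cellD, (x 2) * F x with hS
  have hiF2 : IntegrableOn (fun x => (F x)^2) cellD :=
    integrableOn_cellD_of_continuous (hF.pow 2)
  have hix2 : IntegrableOn (fun x : Fin 3 → ℝ => (24 * S) * ((x 2) * F x)) cellD :=
    (integrableOn_cellD_of_continuous ((continuous_apply 2).mul hF)).const_mul _
  have hix22 : IntegrableOn (fun x : Fin 3 → ℝ => (144 * S^2) * (x 2)^2) cellD :=
    (integrableOn_cellD_of_continuous ((continuous_apply 2).pow 2)).const_mul _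
  have h0 : 0 ≤ ∫ x in cellD, (F x - (12*S) * (x 2))^2 :=
    setIntegral_nonneg measurableSet_cellD fun x _ => sq_nonneg _
  have hexp : (fun x : Fin 3 → ℝ => (F x - (12*S) * (x 2))^2)
      = fun x => ((F x)^2 - (24*S) * ((x 2) * F x)) + (144 * S^2) * (x 2)^2 := by
    funext x; ring
  have hsub : IntegrableOn (fun x : Fin 3 → ℝ => (F x)^2 - (24*S) * ((x 2) * F x)) cellD :=
    hiF2.sub hix2
  rw [hexp, integral_add hsub hix22, integral_sub hiF2 hix2,
    MeasureTheory.integral_const_mul, MeasureTheory.integral_const_mul, ← hS,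
    integral_cellD_x2_sq] at h0
  nlinarith [h0]

/-- the first moment in x₃ of the symmetrized in-plane entries recovers A/12 -/
lemma moment_eq (A B : Matrix (Fin 2) (Fin 2) ℝ) (hA : Aᵀ = A) (hB : Bᵀ = B)
    (φ : (Fin 3 → ℝ) → (Fin 3 → ℝ)) (hφ : ContDiff ℝ (⊤ : ℕ∞) φ)
    (hper : ∀ x : Fin 3 → ℝ, φ (x + Pi.single 0 1) = φ x ∧ φ (x + Pi.single 1 1) = φ x)
    (α β : Fin 2) :
    ∫ x in cellD, (x 2) * sym3 (Lam (x 2) A B + scaledGrad γ φ x) α.castSucc β.castSucc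
      = A α β / 12 := by
  have hML : ∀ (x : Fin 3 → ℝ) (α' β' : Fin 2),
      (Lam (x 2) A B + scaledGrad γ φ x) α'.castSucc β'.castSucc
      = B α' β' + (x 2) * A α' β'
        + fderiv ℝ φ x (Pi.single (β'.castSucc : Fin 3) 1) α'.castSucc := by
    intro x α' β'
    rw [Matrix.add_apply, Lam, iota_entry_castSucc]
    have hsg : scaledGrad γ φ x α'.castSucc β'.castSucc
        = fderiv ℝ φ x (Pi.single (β'.castSucc : Fin 3) 1) α'.castSucc := by
      simp only [scaledGrad, Matrix.of_apply, if_neg (castSucc_ne_two β'), one_mul]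
    rw [hsg, Matrix.add_apply, Matrix.smul_apply, smul_eq_mul]
  have hBs : B β α = B α β :=
    (Matrix.transpose_apply B α β).symm.trans (congrFun (congrFun hB α) β)
  have hAs : A β α = A α β :=
    (Matrix.transpose_apply A α β).symm.trans (congrFun (congrFun hA α) β)
  have hsym : ∀ x : Fin 3 → ℝ,
      (x 2) * sym3 (Lam (x 2) A B + scaledGrad γ φ x) α.castSucc β.castSucc
      = B α β * (x 2) + A α β * (x 2)^2
        + (1/2) * ((x 2) * fderiv ℝ φ x (Pi.single (β.castSucc : Fin 3) 1) α.castSucc)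
        + (1/2) * ((x 2) * fderiv ℝ φ x (Pi.single (α.castSucc : Fin 3) 1) β.castSucc) := by
    intro x
    rw [sym3_apply, hML x α β, hML x β α, hBs, hAs]
    ring
  have hperβ : ∀ x : Fin 3 → ℝ, φ (x + Pi.single (β.castSucc : Fin 3) 1) = φ x := by
    fin_cases β
    · exact fun x => (hper x).1
    · exact fun x => (hper x).2
  have hperα : ∀ x : Fin 3 → ℝ, φ (x + Pi.single (α.castSucc : Fin 3) 1) = φ x := by
    fin_cases α
    · exact fun x => (hper x).1
    · exact fun x => (hper x).2
  have i1 : IntegrableOn (fun x : Fin 3 → ℝ => B α β * (x 2)) cellD :=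
    (integrableOn_cellD_of_continuous (continuous_apply 2)).const_mul _
  have i2 : IntegrableOn (fun x : Fin 3 → ℝ => A α β * (x 2)^2) cellD :=
    (integrableOn_cellD_of_continuous ((continuous_apply 2).pow 2)).const_mul _
  have i3 : IntegrableOn (fun x : Fin 3 → ℝ =>
      (1/2) * ((x 2) * fderiv ℝ φ x (Pi.single (β.castSucc : Fin 3) 1) α.castSucc)) cellD :=
    (integrableOn_cellD_of_continuous ((continuous_apply 2).mul
      (continuous_dirDeriv φ hφ _ _))).const_mul _
  have i4 : IntegrableOn (fun x : Fin 3 → ℝ =>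
      (1/2) * ((x 2) * fderiv ℝ φ x (Pi.single (α.castSucc : Fin 3) 1) β.castSucc)) cellD :=
    (integrableOn_cellD_of_continuous ((continuous_apply 2).mul
      (continuous_dirDeriv φ hφ _ _))).const_mul _
  have e : (fun x : Fin 3 → ℝ =>
      (x 2) * sym3 (Lam (x 2) A B + scaledGrad γ φ x) α.castSucc β.castSucc)
      = fun x => (B α β * (x 2) + A α β * (x 2)^2
        + (1/2) * ((x 2) * fderiv ℝ φ x (Pi.single (β.castSucc : Fin 3) 1) α.castSucc))
        + (1/2) * ((x 2) * fderiv ℝ φ x (Pi.single (α.castSucc : Fin 3) 1) β.castSucc) :=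
    funext fun x => hsym x
  have i12 : IntegrableOn (fun x : Fin 3 → ℝ => B α β * (x 2) + A α β * (x 2)^2) cellD :=
    i1.add i2
  have i123 : IntegrableOn (fun x : Fin 3 → ℝ => B α β * (x 2) + A α β * (x 2)^2
      + (1/2) * ((x 2) * fderiv ℝ φ x (Pi.single (β.castSucc : Fin 3) 1) α.castSucc)) cellD :=
    i12.add i3
  rw [e, integral_add i123 i4, integral_add i12 i3,
    integral_add i1 i2, MeasureTheory.integral_const_mul, MeasureTheory.integral_const_mul,
    MeasureTheory.integral_const_mul, MeasureTheory.integral_const_mul,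
    integral_cellD_x2, integral_cellD_x2_sq,
    integral_cellD_x2_deriv φ hφ _ hperβ (castSucc_ne_two β) _,
    integral_cellD_x2_deriv φ hφ _ hperα (castSucc_ne_two α) _]
  ring

include hQmeas hLsymm hQL hc₁ hlow hup in
lemma En_lower (A B : Matrix (Fin 2) (Fin 2) ℝ) (hA : Aᵀ = A) (hB : Bᵀ = B)
    (φ : (Fin 3 → ℝ) → (Fin 3 → ℝ)) (hφ : ContDiff ℝ (⊤ : ℕ∞) φ)
    (hper : ∀ x : Fin 3 → ℝ, φ (x + Pi.single 0 1) = φ x ∧ φ (x + Pi.single 1 1) = φ x) :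
    c₁ / 12 * frob2 A ^ 2 ≤ En Q γ A B φ := by
  set M := fun x : Fin 3 → ℝ => Lam (x 2) A B + scaledGrad γ φ x with hM
  have hMe : ∀ i j, Continuous fun x => M x i j := cont_M_entry γ A B φ hφ
  have hsE : ∀ i j, Continuous fun x => sym3 (M x) i j := cont_sym3_entry M hMe
  have h1 : ∀ α β : Fin 2, 12 * (A α β / 12)^2
      ≤ ∫ x in cellD, (sym3 (M x) α.castSucc β.castSucc)^2 := by
    intro α β
    have h := CS_moment (fun x => sym3 (M x) α.castSucc β.castSucc) (hsE _ _)
    rwa [moment_eq γ A B hA hB φ hφ hper α β] at h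
  have hintsq : ∀ (i j : Fin 3), IntegrableOn (fun x => (sym3 (M x) i j)^2) cellD :=
    fun i j => integrableOn_cellD_of_continuous ((hsE i j).pow 2)
  have h2 : (∑ α : Fin 2, ∑ β : Fin 2, 12 * (A α β / 12)^2)
      ≤ ∫ x in cellD, ∑ α : Fin 2, ∑ β : Fin 2, (sym3 (M x) α.castSucc β.castSucc)^2 := by
    rw [integral_finset_sum _ (fun α _ => integrable_finset_sum _ fun β _ => hintsq _ _)]
    apply Finset.sum_le_sum
    intro α _
    rw [integral_finset_sum _ (fun β _ => hintsq _ _)]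
    exact Finset.sum_le_sum fun β _ => h1 α β
  have h3 : (∫ x in cellD, ∑ α : Fin 2, ∑ β : Fin 2, (sym3 (M x) α.castSucc β.castSucc)^2)
      ≤ ∫ x in cellD, ∑ i, ∑ j, (sym3 (M x) i j)^2 := by
    apply setIntegral_mono_on
    · exact integrable_finset_sum _ fun α _ => integrable_finset_sum _ fun β _ => hintsq _ _
    · exact integrable_finset_sum _ fun i _ => integrable_finset_sum _ fun j _ => hintsq _ _
    · exact measurableSet_cellD
    · intro x _
      exact sum_inplane_le (sym3 (M x))
  have h4 : c₁ * ∫ x in cellD, (∑ i, ∑ j, (sym3 (M x) i j)^2) ≤ En Q γ A B φ := by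
    rw [← MeasureTheory.integral_const_mul]
    apply setIntegral_mono_on
    · exact (integrable_finset_sum _ fun i _ =>
        integrable_finset_sum _ fun j _ => hintsq _ _).const_mul _
    · exact integrableOn_En Q L γ hQmeas hLsymm hQL c₁ c₂ hc₁ hlow hup A B φ hφ
    · exact measurableSet_cellD
    · intro x _
      have := hlow (fun i : Fin 2 => x i.castSucc) (M x)
      rwa [frob3_sq] at this
  have hsum : (∑ α : Fin 2, ∑ β : Fin 2, 12 * (A α β / 12)^2) = frob2 A ^ 2 / 12 := by
    rw [frob2_sq]
    rw [Finset.sum_div]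
    apply Finset.sum_congr rfl
    intro α _
    rw [Finset.sum_div]
    apply Finset.sum_congr rfl
    intro β _
    ring
  have hc : 0 < c₁ := hc₁
  nlinarith [h2.trans h3, h4, mul_le_mul_of_nonneg_left (h2.trans h3) hc.le]

include hQmeas hLsymm hQL hc₁ hlow hup in
lemma En_upper (A : Matrix (Fin 2) (Fin 2) ℝ) (hA : Aᵀ = A) :
    En Q γ A 0 (fun _ => 0) ≤ c₂ / 12 * ∑ α, ∑ β, (A α β)^2 := by
  have hptw : ∀ x ∈ cellD, Q (fun i : Fin 2 => x i.castSucc)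
      (Lam (x 2) A 0 + scaledGrad γ (fun _ => 0) x)
      ≤ (c₂ * ∑ α, ∑ β, (A α β)^2) * (x 2)^2 := by
    intro x _
    rw [sg_zero, add_zero]
    have h1 := hup (fun i : Fin 2 => x i.castSucc) (Lam (x 2) A 0)
    have h2 : Lam (x 2) A 0 = iota ((x 2) • A) := by rw [Lam, zero_add]
    have h3 : ((x 2) • A)ᵀ = (x 2) • A := by rw [Matrix.transpose_smul, hA]
    rw [h2, sym3_iota_symm h3, frob3_sq, frob3_iota_sq] at h1
    have h4 : (∑ α, ∑ β, (((x 2) • A) α β)^2) = (x 2)^2 * ∑ α, ∑ β, (A α β)^2 := by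
      rw [Finset.mul_sum]
      apply Finset.sum_congr rfl
      intro α _
      rw [Finset.mul_sum]
      apply Finset.sum_congr rfl
      intro β _
      simp only [Matrix.smul_apply, smul_eq_mul, mul_pow]
    rw [h2]
    calc Q (fun i : Fin 2 => x i.castSucc) (iota ((x 2) • A))
        ≤ c₂ * ((x 2)^2 * ∑ α, ∑ β, (A α β)^2) := by rw [← h4]; exact h1
      _ = (c₂ * ∑ α, ∑ β, (A α β)^2) * (x 2)^2 := by ring
  have hEint : IntegrableOn (fun x => Q (fun i : Fin 2 => x i.castSucc)
      (Lam (x 2) A 0 + scaledGrad γ (fun _ => 0) x)) cellD :=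
    integrableOn_En Q L γ hQmeas hLsymm hQL c₁ c₂ hc₁ hlow hup A 0 (fun _ => 0) contDiff_const
  have hx2int : IntegrableOn (fun x : Fin 3 → ℝ =>
      (c₂ * ∑ α, ∑ β, (A α β)^2) * (x 2)^2) cellD :=
    (integrableOn_cellD_of_continuous ((continuous_apply 2).pow 2)).const_mul _
  have hmono := setIntegral_mono_on hEint hx2int measurableSet_cellD hptw
  rw [MeasureTheory.integral_const_mul, integral_cellD_x2_sq] at hmono
  calc En Q γ A 0 (fun _ => 0) ≤ (c₂ * ∑ α, ∑ β, (A α β)^2) * (1/12) := hmono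
    _ = c₂ / 12 * ∑ α, ∑ β, (A α β)^2 := by ring



end Energy

end Stmt12Aux

/-- Q_{2,γ} is a quadratic form on symmetric 2×2 matrices, vanishes at 0, and is positive
definite: Q_{2,γ}(A) ≥ c|A|² for some c > 0 depending on c₁, c₂, γ. -/
theorem stmt12 (γ : ℝ) (hγ : 0 < γ) (c₁ c₂ : ℝ) (hc₁ : 0 < c₁) (hcc : c₁ ≤ c₂)
    (Q : (Fin 2 → ℝ) → Matrix (Fin 3) (Fin 3) ℝ → ℝ)
    (hQmeas : ∀ G, Measurable fun y => Q y G)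
    (hQper : ∀ (y : Fin 2 → ℝ) (i : Fin 2) (G), Q (y + Pi.single i 1) G = Q y G)
    (L : (Fin 2 → ℝ) → Matrix (Fin 3) (Fin 3) ℝ →ₗ[ℝ] Matrix (Fin 3) (Fin 3) ℝ →ₗ[ℝ] ℝ)
    (hLsymm : ∀ y A B, L y A B = L y B A) (hQL : ∀ y G, Q y G = L y G G)
    (hQsym : ∀ y G, Q y G = Q y (sym3 G))
    (hlow : ∀ y G, c₁ * (frob3 (sym3 G)) ^ 2 ≤ Q y G)
    (hup : ∀ y G, Q y G ≤ c₂ * (frob3 (sym3 G)) ^ 2) :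
    (∃ L₂ : Matrix (Fin 2) (Fin 2) ℝ →ₗ[ℝ] Matrix (Fin 2) (Fin 2) ℝ →ₗ[ℝ] ℝ,
      (∀ A B, L₂ A B = L₂ B A) ∧
      ∀ A : Matrix (Fin 2) (Fin 2) ℝ, Aᵀ = A → Q2γ Q γ A = L₂ A A) ∧
    Q2γ Q γ 0 = 0 ∧
    ∃ c : ℝ, 0 < c ∧
      ∀ A : Matrix (Fin 2) (Fin 2) ℝ, Aᵀ = A → c * (frob2 A) ^ 2 ≤ Q2γ Q γ A := by
  classical
  -- basic facts about the admissible set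
  have hmem : ∀ (A B : Matrix (Fin 2) (Fin 2) ℝ), Bᵀ = B →
      ∀ φ, ContDiff ℝ (⊤ : ℕ∞) φ →
      (∀ x : Fin 3 → ℝ, φ (x + Pi.single 0 1) = φ x ∧ φ (x + Pi.single 1 1) = φ x) →
      Stmt12Aux.En Q γ A B φ ∈ Stmt12Aux.Eset Q γ A :=
    fun A B hB φ hφ hper => ⟨B, hB, φ, hφ, hper, rfl⟩
  have hne : ∀ A, (Stmt12Aux.Eset Q γ A).Nonempty := fun A =>
    ⟨Stmt12Aux.En Q γ A 0 (fun _ => 0),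
      hmem A 0 Matrix.transpose_zero _ contDiff_const (fun x => ⟨rfl, rfl⟩)⟩
  have hnonneg : ∀ A, ∀ r ∈ Stmt12Aux.Eset Q γ A, (0:ℝ) ≤ r := by
    rintro A r ⟨B, hB, φ, hφ, hper, rfl⟩
    apply setIntegral_nonneg Stmt12Aux.measurableSet_cellD
    intro x _
    exact Stmt12Aux.Q_nonneg Q c₁ hc₁ hlow _ _
  have hbdd : ∀ A, BddBelow (Stmt12Aux.Eset Q γ A) := fun A =>
    ⟨0, fun r hr => hnonneg A r hr⟩
  have hQ2 : ∀ A, Q2γ Q γ A = sInf (Stmt12Aux.Eset Q γ A) := Stmt12Aux.Q2γ_eq Q γ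
  -- lower bound
  have hlb : ∀ A : Matrix (Fin 2) (Fin 2) ℝ, Aᵀ = A →
      c₁ / 12 * frob2 A ^ 2 ≤ Q2γ Q γ A := by
    intro A hA
    rw [hQ2]
    apply le_csInf (hne A)
    rintro r ⟨B, hB, φ, hφ, hper, rfl⟩
    exact Stmt12Aux.En_lower Q L γ hQmeas hLsymm hQL c₁ c₂ hc₁ hlow hup A B hA hB φ hφ hper
  -- nonnegativity of the infimum
  have hnn : ∀ A : Matrix (Fin 2) (Fin 2) ℝ, 0 ≤ Q2γ Q γ A := by
    intro A
    rw [hQ2]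
    exact le_csInf (hne A) (hnonneg A)
  -- upper bound
  have hub : ∀ A : Matrix (Fin 2) (Fin 2) ℝ, Aᵀ = A →
      Q2γ Q γ A ≤ c₂ * ∑ α, ∑ β, (A α β)^2 := by
    intro A hA
    have h1 := csInf_le (hbdd A)
      (hmem A 0 Matrix.transpose_zero (fun _ => (0 : Fin 3 → ℝ)) contDiff_const
        (fun x => ⟨rfl, rfl⟩))
    rw [← hQ2] at h1
    have h2 := Stmt12Aux.En_upper Q L γ hQmeas hLsymm hQL c₁ c₂ hc₁ hlow hup A hA
    have hSnn : (0:ℝ) ≤ ∑ α, ∑ β, (A α β)^2 :=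
      Finset.sum_nonneg fun α _ => Finset.sum_nonneg fun β _ => sq_nonneg _
    have hc₂ : (0:ℝ) ≤ c₂ := le_trans hc₁.le hcc
    nlinarith [h1.trans h2]
  -- value at zero
  have hzero : Q2γ Q γ 0 = 0 := by
    have h1 := hub 0 Matrix.transpose_zero
    simp only [Matrix.zero_apply, ne_eq, OfNat.ofNat_ne_zero, not_false_eq_true,
      zero_pow, Finset.sum_const_zero, mul_zero] at h1
    exact le_antisymm h1 (hnn 0)
  -- scaling
  have hscale_le : ∀ t : ℝ, t ≠ 0 → ∀ A : Matrix (Fin 2) (Fin 2) ℝ,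
      Q2γ Q γ (t • A) ≤ t ^ 2 * Q2γ Q γ A := by
    intro t ht A
    have ht2 : (0:ℝ) < t ^ 2 := by positivity
    have key : ∀ r ∈ Stmt12Aux.Eset Q γ A, sInf (Stmt12Aux.Eset Q γ (t • A)) ≤ t ^ 2 * r := by
      rintro r ⟨B, hB, φ, hφ, hper, rfl⟩
      have hper' : ∀ x : Fin 3 → ℝ, (t • φ) (x + Pi.single 0 1) = (t • φ) x ∧
          (t • φ) (x + Pi.single 1 1) = (t • φ) x := by
        intro x
        constructor
        · show t • φ (x + Pi.single 0 1) = t • φ x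
          rw [(hper x).1]
        · show t • φ (x + Pi.single 1 1) = t • φ x
          rw [(hper x).2]
      have hmem' := hmem (t • A) (t • B) (by rw [Matrix.transpose_smul, hB]) (t • φ)
        (hφ.const_smul t) hper'
      have h1 := csInf_le (hbdd (t • A)) hmem'
      rwa [Stmt12Aux.En_smul Q L γ hQL t A B φ hφ] at h1
    rw [hQ2, hQ2]
    have h2 : sInf (Stmt12Aux.Eset Q γ (t • A)) / t ^ 2 ≤ sInf (Stmt12Aux.Eset Q γ A) := by
      apply le_csInf (hne A)
      intro r hr
      rw [div_le_iff₀ ht2]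
      calc sInf (Stmt12Aux.Eset Q γ (t • A)) ≤ t ^ 2 * r := key r hr
        _ = r * t ^ 2 := by ring
    calc sInf (Stmt12Aux.Eset Q γ (t • A))
        = sInf (Stmt12Aux.Eset Q γ (t • A)) / t ^ 2 * t ^ 2 := by field_simp
      _ ≤ sInf (Stmt12Aux.Eset Q γ A) * t ^ 2 := by
          exact mul_le_mul_of_nonneg_right h2 ht2.le
      _ = t ^ 2 * sInf (Stmt12Aux.Eset Q γ A) := by ring
  have hscale : ∀ t : ℝ, t ≠ 0 → ∀ A : Matrix (Fin 2) (Fin 2) ℝ,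
      Q2γ Q γ (t • A) = t ^ 2 * Q2γ Q γ A := by
    intro t ht A
    have h1 := hscale_le t ht A
    have h2 := hscale_le t⁻¹ (inv_ne_zero ht) (t • A)
    rw [smul_smul, inv_mul_cancel₀ ht, one_smul] at h2
    have ht2 : (0:ℝ) < t ^ 2 := by positivity
    have h3 : (t⁻¹) ^ 2 = (t ^ 2)⁻¹ := by rw [inv_pow]
    rw [h3] at h2
    have h4 : t ^ 2 * Q2γ Q γ A ≤ Q2γ Q γ (t • A) := by
      have := mul_le_mul_of_nonneg_left h2 ht2.le
      rwa [← mul_assoc, mul_inv_cancel₀ ht2.ne', one_mul] at this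
    linarith
  -- parallelogram inequality
  have hpar_le : ∀ X Y : Matrix (Fin 2) (Fin 2) ℝ, Xᵀ = X → Yᵀ = Y →
      Q2γ Q γ (X + Y) + Q2γ Q γ (X - Y) ≤ 2 * Q2γ Q γ X + 2 * Q2γ Q γ Y := by
    intro X Y hX hY
    apply le_of_forall_pos_le_add
    intro ε hε
    have hX4 : sInf (Stmt12Aux.Eset Q γ X) < sInf (Stmt12Aux.Eset Q γ X) + ε / 4 := by
      linarith
    have hY4 : sInf (Stmt12Aux.Eset Q γ Y) < sInf (Stmt12Aux.Eset Q γ Y) + ε / 4 := by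
      linarith
    obtain ⟨r₁, hr₁mem, hr₁⟩ := exists_lt_of_csInf_lt (hne X) hX4
    obtain ⟨r₂, hr₂mem, hr₂⟩ := exists_lt_of_csInf_lt (hne Y) hY4
    obtain ⟨B, hB, φ, hφ, hper, rfl⟩ := hr₁mem
    obtain ⟨B', hB', φ', hφ', hper', rfl⟩ := hr₂mem
    have hperadd : ∀ x : Fin 3 → ℝ, (φ + φ') (x + Pi.single 0 1) = (φ + φ') x ∧
        (φ + φ') (x + Pi.single 1 1) = (φ + φ') x := by
      intro x
      constructor
      · show φ (x + Pi.single 0 1) + φ' (x + Pi.single 0 1) = φ x + φ' x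
        rw [(hper x).1, (hper' x).1]
      · show φ (x + Pi.single 1 1) + φ' (x + Pi.single 1 1) = φ x + φ' x
        rw [(hper x).2, (hper' x).2]
    have hpersub : ∀ x : Fin 3 → ℝ, (φ - φ') (x + Pi.single 0 1) = (φ - φ') x ∧
        (φ - φ') (x + Pi.single 1 1) = (φ - φ') x := by
      intro x
      constructor
      · show φ (x + Pi.single 0 1) - φ' (x + Pi.single 0 1) = φ x - φ' x
        rw [(hper x).1, (hper' x).1]
      · show φ (x + Pi.single 1 1) - φ' (x + Pi.single 1 1) = φ x - φ' x
        rw [(hper x).2, (hper' x).2]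
    have h1 : Q2γ Q γ (X + Y) ≤ Stmt12Aux.En Q γ (X + Y) (B + B') (φ + φ') := by
      rw [hQ2]
      exact csInf_le (hbdd _) (hmem _ _ (by rw [Matrix.transpose_add, hB, hB']) _
        (hφ.add hφ') hperadd)
    have h2 : Q2γ Q γ (X - Y) ≤ Stmt12Aux.En Q γ (X - Y) (B - B') (φ - φ') := by
      rw [hQ2]
      exact csInf_le (hbdd _) (hmem _ _ (by rw [Matrix.transpose_sub, hB, hB']) _
        (hφ.sub hφ') hpersub)
    have h3 := Stmt12Aux.En_par Q L γ hQmeas hLsymm hQL c₁ c₂ hc₁ hlow hup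
      X Y B B' φ φ' hφ hφ'
    rw [← hQ2 X, ← hQ2 Y] at *
    linarith
  -- parallelogram equality
  have hpar : ∀ X Y : Matrix (Fin 2) (Fin 2) ℝ, Xᵀ = X → Yᵀ = Y →
      Q2γ Q γ (X + Y) + Q2γ Q γ (X - Y) = 2 * Q2γ Q γ X + 2 * Q2γ Q γ Y := by
    intro X Y hX hY
    have h1 := hpar_le X Y hX hY
    have h2 := hpar_le (X + Y) (X - Y) (Stmt12Aux.symT hX hY) (Stmt12Aux.symTsub hX hY)
    rw [show X + Y + (X - Y) = (2:ℝ) • X by module,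
      show X + Y - (X - Y) = (2:ℝ) • Y by module,
      hscale 2 two_ne_zero, hscale 2 two_ne_zero] at h2
    norm_num at h2
    linarith
  -- the bilinear form via polarization
  have hK : (0:ℝ) ≤ c₂ := le_trans hc₁.le hcc
  have hnnS : ∀ X : Matrix (Fin 2) (Fin 2) ℝ, Xᵀ = X → 0 ≤ Q2γ Q γ X := fun X _ => hnn X
  set symp : Matrix (Fin 2) (Fin 2) ℝ → Matrix (Fin 2) (Fin 2) ℝ :=
    fun X => (1/2 : ℝ) • (X + Xᵀ) with hsymp
  have hsympT : ∀ X, (symp X)ᵀ = symp X := by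
    intro X
    rw [hsymp]
    simp only [Matrix.transpose_smul, Matrix.transpose_add, Matrix.transpose_transpose]
    rw [add_comm]
  have hsymp_add : ∀ X Y, symp (X + Y) = symp X + symp Y := by
    intro X Y
    simp only [hsymp, Matrix.transpose_add]
    module
  have hsymp_smul : ∀ (c : ℝ) X, symp (c • X) = c • symp X := by
    intro c X
    simp only [hsymp, Matrix.transpose_smul]
    module
  have hsymp_id : ∀ X, Xᵀ = X → symp X = X := by
    intro X hX
    simp only [hsymp, hX]
    module
  have haddl : ∀ X Y Z : Matrix (Fin 2) (Fin 2) ℝ, Xᵀ = X → Yᵀ = Y → Zᵀ = Z →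
      Stmt12Aux.Bp (Q2γ Q γ) (X + Y) Z
        = Stmt12Aux.Bp (Q2γ Q γ) X Z + Stmt12Aux.Bp (Q2γ Q γ) Y Z :=
    fun X Y Z hX hY hZ => Stmt12Aux.Bp_add_left (Q2γ Q γ) hpar hzero hX hY hZ
  have hsmull : ∀ (t : ℝ) (X Z : Matrix (Fin 2) (Fin 2) ℝ), Xᵀ = X → Zᵀ = Z →
      Stmt12Aux.Bp (Q2γ Q γ) (t • X) Z = t * Stmt12Aux.Bp (Q2γ Q γ) X Z :=
    fun t X Z hX hZ => Stmt12Aux.Bp_smul_left (Q2γ Q γ) hpar hzero c₂ hK hnnS hub t hX hZ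
  have hsymmB : ∀ X Y : Matrix (Fin 2) (Fin 2) ℝ, Xᵀ = X → Yᵀ = Y →
      Stmt12Aux.Bp (Q2γ Q γ) X Y = Stmt12Aux.Bp (Q2γ Q γ) Y X :=
    fun X Y hX hY => Stmt12Aux.Bp_symm (Q2γ Q γ) hX hY hpar hzero
  refine ⟨⟨LinearMap.mk₂ ℝ (fun X Y => Stmt12Aux.Bp (Q2γ Q γ) (symp X) (symp Y))
      ?_ ?_ ?_ ?_, ?_, ?_⟩, hzero, c₁ / 12, by positivity, fun A hA => hlb A hA⟩
  · intro m₁ m₂ n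
    beta_reduce
    rw [hsymp_add]
    exact haddl _ _ _ (hsympT m₁) (hsympT m₂) (hsympT n)
  · intro c m n
    beta_reduce
    rw [hsymp_smul]
    rw [hsmull c _ _ (hsympT m) (hsympT n)]
    rfl
  · intro m n₁ n₂
    beta_reduce
    rw [hsymp_add, hsymmB _ _ (hsympT m) (Stmt12Aux.symT (hsympT n₁) (hsympT n₂)),
      haddl _ _ _ (hsympT n₁) (hsympT n₂) (hsympT m),
      hsymmB _ _ (hsympT n₁) (hsympT m), hsymmB _ _ (hsympT n₂) (hsympT m)]
  · intro c m n
    beta_reduce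
    rw [hsymp_smul, hsymmB _ _ (hsympT m) (by rw [Matrix.transpose_smul, hsympT n]),
      hsmull c _ _ (hsympT n) (hsympT m), hsymmB _ _ (hsympT n) (hsympT m)]
    rfl
  · intro A B
    simp only [LinearMap.mk₂_apply]
    exact hsymmB _ _ (hsympT A) (hsympT B)
  · intro A hA
    simp only [LinearMap.mk₂_apply, hsymp_id A hA]
    rw [Stmt12Aux.Bp, show A + A = (2:ℝ) • A by module, sub_self, hzero,
      hscale 2 two_ne_zero A]
    norm_num


end
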